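/- With H and P as above, the homomorphism μ: H → ℤ defined on generators by μ(h_{i₁i₂i₃i₄i₅}) = sgn(σ), where σ is the permutation sending (1,2,3,4,5) to (i₁,...,i₅), satisfies μ(P) = 3ℤ. -/

import Mathlib

noncomputable section

/-- `H`: the free abelian group on generators `h_{i₁i₂i₃i₄i₅}` indexed by permutations
of `{1,…,5}` (here `Equiv.Perm (Fin 5)`, where `σ k = i_{k+1}`). -/
abbrev H : Type := Equiv.Perm (Fin 5) →₀ ℤ

/-- The generator `h_{i₁i₂i₃i₄i₅}` corresponding to a permutation. -/
def h (σ : Equiv.Perm (Fin 5)) : H := Finsupp.single σ 1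

/-- The 3-cycle `(0 1 2)` on positions, used to express `h_{i₂i₃i₁i₄i₅}` as `h (σ * c)`. -/
def c : Equiv.Perm (Fin 5) := Equiv.swap 0 1 * Equiv.swap 1 2

/-- `P`: the subgroup of `H` generated by all `h_{i₁i₂i₃i₄i₅} + h_{i₂i₁i₃i₄i₅}`,
`h_{i₁i₂i₃i₄i₅} + h_{i₁i₂i₃i₅i₄}`, `h_{i₁i₂i₃i₄i₅} + h_{i₂i₃i₁i₄i₅} + h_{i₃i₁i₂i₄i₅}`,
`h_{i₁i₂i₃i₄i₅} + h_{i₁i₂i₄i₃i₅}` and `h_{i₁i₂i₃i₄i₅} + h_{i₁i₄i₃i₂i₅}`. -/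
def P : AddSubgroup H := AddSubgroup.closure
  ({y | ∃ σ, y = h σ + h (σ * Equiv.swap 0 1)} ∪
   {y | ∃ σ, y = h σ + h (σ * Equiv.swap 3 4)} ∪
   {y | ∃ σ, y = h σ + h (σ * c) + h (σ * c * c)} ∪
   {y | ∃ σ, y = h σ + h (σ * Equiv.swap 2 3)} ∪
   {y | ∃ σ, y = h σ + h (σ * Equiv.swap 1 3)})


/-- The sign homomorphism `μ : H → ℤ`, `μ(h_σ) = sgn σ`. -/
def μ : H →+ ℤ := Finsupp.liftAddHom fun σ => zmultiplesHom ℤ (Equiv.Perm.sign σ : ℤ)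

/-! Each relator built from a transposition has image `sgn σ - sgn σ = 0` under `μ`, and since the
3-cycle `c` is even the remaining relator has image `3 sgn σ`; at `σ = 1` this is `3`. -/

open Equiv

lemma μ_h (σ : Perm (Fin 5)) : μ (h σ) = Perm.sign σ := by
  simp [μ, h]

lemma sign_c : Perm.sign c = 1 := by
  decide

lemma μ_h_add_h_mul_swap (σ : Perm (Fin 5)) {i j : Fin 5} (hij : i ≠ j) :
    μ (h σ + h (σ * swap i j)) = 0 := by
  simp [μ_h, Perm.sign_swap hij]

lemma μ_h_add_h_mul_c_add_h_mul_c_mul_c (σ : Perm (Fin 5)) :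
    μ (h σ + h (σ * c) + h (σ * c * c)) = 3 * Perm.sign σ := by
  simp only [map_add, μ_h, map_mul, sign_c, mul_one]
  ring

/-- `μ(P) = 3ℤ`. -/
theorem stmt13 : AddSubgroup.map μ P = AddSubgroup.closure {(3 : ℤ)} := by
  rw [P, AddMonoidHom.map_closure, ← AddSubgroup.zmultiples_eq_closure]
  apply le_antisymm
  · rw [AddSubgroup.closure_le]
    rintro _ ⟨y, hy, rfl⟩
    rw [SetLike.mem_coe, Int.mem_zmultiples_iff]
    rcases hy with ((((⟨σ, rfl⟩ | ⟨σ, rfl⟩) | ⟨σ, rfl⟩) | ⟨σ, rfl⟩) | ⟨σ, rfl⟩)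
    · simp [μ_h_add_h_mul_swap σ (by decide : (0 : Fin 5) ≠ 1)]
    · simp [μ_h_add_h_mul_swap σ (by decide : (3 : Fin 5) ≠ 4)]
    · exact μ_h_add_h_mul_c_add_h_mul_c_mul_c σ ▸ dvd_mul_right 3 _
    · simp [μ_h_add_h_mul_swap σ (by decide : (2 : Fin 5) ≠ 3)]
    · simp [μ_h_add_h_mul_swap σ (by decide : (1 : Fin 5) ≠ 3)]
  · rw [AddSubgroup.zmultiples_le]
    refine AddSubgroup.subset_closure ⟨_, Or.inl (Or.inl (Or.inr ⟨1, rfl⟩)), ?_⟩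
    rw [μ_h_add_h_mul_c_add_h_mul_c_mul_c, map_one, Units.val_one, mul_one]
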